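/- arXiv:2604.10192 — 2 statements merged into one kernel-verified Lean document; each statement's English description precedes it below -/
import Mathlib

section
/- Let f be a discrete Morse function on a finite simplicial complex K and let K_α = {σ ∈ K : f(σ) ≤ α} denote sublevel complexes. If the interval (α, β] contains no critical values (values of critical simplices), then K_β collapses to K_α. -/
open Classical

/-- A finite abstract simplicial complex on vertex type `V`. -/
structure SComplex (V : Type) [DecidableEq V] where
  faces : Finset (Finset V)
  nonempty_of_mem : ∀ s ∈ faces, s.Nonempty
  down_closed : ∀ s ∈ faces, ∀ t, t ⊆ s → t.Nonempty → t ∈ faces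

namespace SComplex

variable {V : Type} [DecidableEq V]

/-- The set entering the discrete-Morse condition at a simplex `σ`:
codimension-one faces `τ ⊂ σ` with `f τ ≥ f σ` together with
codimension-one cofaces `τ ⊃ σ` with `f τ ≤ f σ`. -/
noncomputable def exitSet (K : SComplex V) (f : Finset V → ℝ) (σ : Finset V) :
    Finset (Finset V) :=
  K.faces.filter (fun τ =>
    (τ ⊆ σ ∧ τ.card + 1 = σ.card ∧ f σ ≤ f τ) ∨
    (σ ⊆ τ ∧ σ.card + 1 = τ.card ∧ f τ ≤ f σ))

/-- Forman's discrete Morse condition. -/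
def IsDiscreteMorse (K : SComplex V) (f : Finset V → ℝ) : Prop :=
  ∀ σ ∈ K.faces, (K.exitSet f σ).card ≤ 1

def IsCritical (K : SComplex V) (f : Finset V → ℝ) (σ : Finset V) : Prop :=
  σ ∈ K.faces ∧ K.exitSet f σ = ∅

noncomputable def critSet (K : SComplex V) (f : Finset V → ℝ) : Finset (Finset V) :=
  K.faces.filter (fun σ => K.exitSet f σ = ∅)

/-- total number of critical simplices of `f` -/
noncomputable def critCount (K : SComplex V) (f : Finset V → ℝ) : ℕ :=
  (K.critSet f).card

/-- number of critical `p`-simplices of `f` -/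
noncomputable def critCountDim (K : SComplex V) (f : Finset V → ℝ) (p : ℕ) : ℕ :=
  ((K.critSet f).filter (fun σ => σ.card = p + 1)).card

/-- minimal Morse number -/
noncomputable def M (K : SComplex V) : ℕ :=
  sInf {n | ∃ f, K.IsDiscreteMorse f ∧ K.critCount f = n}

/-- minimal number of critical `k`-simplices -/
noncomputable def mdim (K : SComplex V) (k : ℕ) : ℕ :=
  sInf {n | ∃ f, K.IsDiscreteMorse f ∧ K.critCountDim f k = n}

/-- `σ` is a free face of `τ`. -/
def IsFreePair (K : SComplex V) (σ τ : Finset V) : Prop :=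
  σ ∈ K.faces ∧ τ ∈ K.faces ∧ σ ⊂ τ ∧ ∀ ρ ∈ K.faces, σ ⊂ ρ → ρ = τ

/-- `K'` is obtained from `K` by one elementary collapse. -/
def CollapseStep (K K' : SComplex V) : Prop :=
  ∃ σ τ, K.IsFreePair σ τ ∧ K'.faces = K.faces \ {σ, τ}

def CollapsesTo (K L : SComplex V) : Prop :=
  Relation.ReflTransGen (fun A B => CollapseStep A B) K L

/-- the single-vertex complex -/
def pt (v : V) : SComplex V where
  faces := {{v}}
  nonempty_of_mem := by intro s hs; simp only [Finset.mem_singleton] at hs; subst hs; exact ⟨v, by simp⟩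
  down_closed := by
    intro s hs t hts ht
    simp only [Finset.mem_singleton] at hs ⊢
    subst hs
    rcases (Finset.subset_singleton_iff.mp hts) with h | h
    · exact absurd h (Finset.nonempty_iff_ne_empty.mp ht)
    · exact h

def Collapsible (K : SComplex V) : Prop := ∃ v : V, K.CollapsesTo (pt v)

/-- simple-homotopy equivalence: generated by elementary collapses and expansions -/
def SHEquiv (K L : SComplex V) : Prop :=
  Relation.ReflTransGen (fun A B => CollapseStep A B ∨ CollapseStep B A) K L

/-- a closed non-trivial V-path within a set of (codim-one) pairs -/
def HasClosedVPath (pairs : Set (Finset V × Finset V)) : Prop :=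
  ∃ c : List (Finset V × Finset V), ∃ h : c ≠ [],
    (∀ p ∈ c, p ∈ pairs) ∧
    c.Chain' (fun p q => q.1 ⊆ p.2 ∧ q.1 ≠ p.1) ∧
    (c.head h).1 ⊆ (c.getLast h).2 ∧ (c.head h).1 ≠ (c.getLast h).1

/-- a discrete vector field on `K` -/
structure DVField (K : SComplex V) where
  pairs : Finset (Finset V × Finset V)
  mem₁ : ∀ p ∈ pairs, p.1 ∈ K.faces
  mem₂ : ∀ p ∈ pairs, p.2 ∈ K.faces
  codim : ∀ p ∈ pairs, p.1 ⊆ p.2 ∧ p.1.card + 1 = p.2.card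
  disj : ∀ p ∈ pairs, ∀ q ∈ pairs, p ≠ q →
      p.1 ≠ q.1 ∧ p.1 ≠ q.2 ∧ p.2 ≠ q.1 ∧ p.2 ≠ q.2

/-- the gradient pairs of a discrete Morse function `f` -/
noncomputable def gradPairs (K : SComplex V) (f : Finset V → ℝ) :
    Finset (Finset V × Finset V) :=
  (K.faces ×ˢ K.faces).filter
    (fun p => p.1 ⊆ p.2 ∧ p.1.card + 1 = p.2.card ∧ f p.2 ≤ f p.1)

/-- the sublevel subcomplex `K_α` (Forman's `K(α)`). -/
noncomputable def sublevel (K : SComplex V) (f : Finset V → ℝ) (α : ℝ) : SComplex V where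
  faces := K.faces.filter (fun σ => ∃ τ ∈ K.faces, f τ ≤ α ∧ σ ⊆ τ)
  nonempty_of_mem := fun s hs => K.nonempty_of_mem s (Finset.mem_filter.mp hs).1
  down_closed := by
    intro s hs t hts ht
    rw [Finset.mem_filter] at hs ⊢
    obtain ⟨hsK, τ, hτ, hfτ, hsτ⟩ := hs
    exact ⟨K.down_closed s hsK t hts ht, τ, hτ, hfτ, hts.trans hsτ⟩

/-- a recorded sequence of elementary collapses from `K` to `L`,
listing the removed free pairs in order -/
inductive CollapseSeq : SComplex V → List (Finset V × Finset V) → SComplex V → Prop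
  | nil (K : SComplex V) : CollapseSeq K [] K
  | cons {K K' L : SComplex V} {σ τ : Finset V} {l : List (Finset V × Finset V)} :
      K.IsFreePair σ τ → K'.faces = K.faces \ {σ, τ} →
      CollapseSeq K' l L → CollapseSeq K ((σ, τ) :: l) L

/-- geometric realization of `K` inside `V → ℝ` -/
def realization [Fintype V] (K : SComplex V) : Set (V → ℝ) :=
  {x | (∀ v, 0 ≤ x v) ∧ (∑ v, x v) = 1 ∧ ∃ s ∈ K.faces, ∀ v, x v ≠ 0 → v ∈ s}

end SComplex
namespace SComplex

variable {V : Type} [DecidableEq V]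

lemma faces_inj {L M : SComplex V} (h : L.faces = M.faces) : L = M := by
  cases L; cases M; simp_all

lemma exit_unique {K : SComplex V} {f : Finset V → ℝ} (hf : K.IsDiscreteMorse f)
    {σ τ₁ τ₂ : Finset V} (hσ : σ ∈ K.faces)
    (h1 : τ₁ ∈ K.exitSet f σ) (h2 : τ₂ ∈ K.exitSet f σ) : τ₁ = τ₂ :=
  Finset.card_le_one.mp (hf σ hσ) _ h1 _ h2

lemma mem_exitSet_iff {K : SComplex V} {f : Finset V → ℝ} {σ τ : Finset V} :
    τ ∈ K.exitSet f σ ↔ τ ∈ K.faces ∧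
      ((τ ⊆ σ ∧ τ.card + 1 = σ.card ∧ f σ ≤ f τ) ∨
       (σ ⊆ τ ∧ σ.card + 1 = τ.card ∧ f τ ≤ f σ)) := by
  simp [exitSet]

lemma mem_gradPairs_iff {K : SComplex V} {f : Finset V → ℝ} {p : Finset V × Finset V} :
    p ∈ K.gradPairs f ↔ p.1 ∈ K.faces ∧ p.2 ∈ K.faces ∧ p.1 ⊆ p.2 ∧
      p.1.card + 1 = p.2.card ∧ f p.2 ≤ f p.1 := by
  simp [gradPairs, Finset.mem_filter, Finset.mem_product, and_assoc]

/-- Key structural lemma: if `σ ⊆ τ` then either `f σ ≤ f τ` or `σ` has a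
codimension-one coface inside `τ` of no larger `f`-value. -/
lemma key {K : SComplex V} {f : Finset V → ℝ} (hf : K.IsDiscreteMorse f) :
    ∀ (n : ℕ) (σ τ : Finset V), σ ∈ K.faces → τ ∈ K.faces → σ ⊆ τ →
      τ.card = σ.card + n →
      f σ ≤ f τ ∨ ∃ ρ ∈ K.faces, σ ⊆ ρ ∧ ρ ⊆ τ ∧ ρ.card = σ.card + 1 ∧ f ρ ≤ f σ := by
  intro n
  induction n using Nat.strong_induction_on with
  | _ n ih =>
    intro σ τ hσK hτK hστ hcard
    match n, hcard with
    | 0, hcard =>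
      left
      have : σ = τ := Finset.eq_of_subset_of_card_le hστ (by omega)
      rw [this]
    | 1, hcard =>
      by_cases h : f σ ≤ f τ
      · exact Or.inl h
      · exact Or.inr ⟨τ, hτK, hστ, Finset.Subset.refl τ, by omega, le_of_not_ge h⟩
    | (m+2), hcard =>
      by_cases hle : f σ ≤ f τ
      · exact Or.inl hle
      by_cases hup : ∃ ρ ∈ K.faces, σ ⊆ ρ ∧ ρ ⊆ τ ∧ ρ.card = σ.card + 1 ∧ f ρ ≤ f σ
      · exact Or.inr hup
      exfalso
      push_neg at hup hle
      -- all codim-1 cofaces of σ inside τ have bigger value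
      have hρ_mem : ∀ v ∈ τ \ σ, insert v σ ∈ K.faces := by
        intro v hv
        rw [Finset.mem_sdiff] at hv
        exact K.down_closed τ hτK _ (Finset.insert_subset hv.1 hστ)
          (Finset.insert_nonempty _ _)
      have hρ_card : ∀ v ∈ τ \ σ, (insert v σ).card = σ.card + 1 := by
        intro v hv
        rw [Finset.mem_sdiff] at hv
        exact Finset.card_insert_of_notMem hv.2
      have hρ_sub : ∀ v ∈ τ \ σ, insert v σ ⊆ τ := by
        intro v hv
        rw [Finset.mem_sdiff] at hv
        exact Finset.insert_subset hv.1 hστ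
      have hρ_big : ∀ v ∈ τ \ σ, f σ < f (insert v σ) := by
        intro v hv
        by_contra h
        exact absurd (hup (insert v σ) (hρ_mem v hv) (Finset.subset_insert v σ)
          (hρ_sub v hv) (hρ_card v hv)) (by push_neg; exact le_of_not_gt h)
      -- pick v minimizing f (insert v σ)
      have hne : (τ \ σ).Nonempty := by
        rw [← Finset.card_pos, Finset.card_sdiff_of_subset hστ]; omega
      obtain ⟨v, hv, hmin⟩ := Finset.exists_min_image (τ \ σ) (fun v => f (insert v σ)) hne
      -- get the pair top for `insert v σ`
      have hIH := ih (m+1) (by omega) (insert v σ) τ (hρ_mem v hv) hτK (hρ_sub v hv)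
        (by rw [hρ_card v hv]; omega)
      rcases hIH with h | ⟨μ, hμK, hρμ, hμτ, hμcard, hfμ⟩
      · exact absurd (lt_of_lt_of_le (hρ_big v hv) h) (not_lt.mpr (le_of_lt hle))
      -- get w, the extra vertex of μ
      have hwne : (μ \ insert v σ).Nonempty := by
        rw [← Finset.card_pos, Finset.card_sdiff_of_subset hρμ, hμcard]; omega
      obtain ⟨w, hw⟩ := hwne
      rw [Finset.mem_sdiff] at hw
      have hwσ : w ∉ σ := fun h => hw.2 (Finset.mem_insert_of_mem h)
      have hwv : w ≠ v := fun h => hw.2 (h ▸ Finset.mem_insert_self v σ)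
      have hwτσ : w ∈ τ \ σ := Finset.mem_sdiff.mpr ⟨hμτ hw.1, hwσ⟩
      have hρwμ : insert w σ ⊆ μ :=
        Finset.insert_subset hw.1 ((Finset.subset_insert v σ).trans hρμ)
      by_cases hcase : f μ ≤ f (insert w σ)
      · -- μ is a down-exit of itself from both ρv and ρw : contradiction at μ
        have e1 : insert v σ ∈ K.exitSet f μ := by
          rw [mem_exitSet_iff]
          exact ⟨hρ_mem v hv, Or.inl ⟨hρμ, by rw [hρ_card v hv, hμcard, hρ_card v hv], hfμ⟩⟩
        have e2 : insert w σ ∈ K.exitSet f μ := by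
          rw [mem_exitSet_iff]
          exact ⟨hρ_mem w hwτσ, Or.inl ⟨hρwμ,
            by rw [hρ_card w hwτσ, hμcard, hρ_card v hv], hcase⟩⟩
        have := exit_unique hf hμK e1 e2
        have : v = w := by
          have hv' : v ∈ insert w σ := this ▸ Finset.mem_insert_self v σ
          rcases Finset.mem_insert.mp hv' with h | h
          · exact h
          · exact absurd h (Finset.mem_sdiff.mp hv).2
        exact hwv this.symm
      · -- contradiction with minimality of v
        have h1 : f (insert v σ) ≤ f (insert w σ) := hmin w hwτσ
        push_neg at hcase
        linarith

/-- in a sublevel complex, the top of a gradient pair is present whenever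
the bottom is. -/
lemma top_mem_sublevel {K : SComplex V} {f : Finset V → ℝ} (hf : K.IsDiscreteMorse f)
    (γ : ℝ) {σ τ : Finset V} (hp : (σ, τ) ∈ K.gradPairs f)
    (hσ : σ ∈ (K.sublevel f γ).faces) : τ ∈ (K.sublevel f γ).faces := by
  rw [mem_gradPairs_iff] at hp
  obtain ⟨hσK, hτK, hστ, hcard, hfτσ⟩ := hp
  simp only [sublevel, Finset.mem_filter] at hσ ⊢
  obtain ⟨-, μ, hμK, hfμ, hσμ⟩ := hσ
  by_cases h : f σ ≤ γ
  · exact ⟨hτK, τ, hτK, le_trans hfτσ h, Finset.Subset.refl τ⟩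
  · push_neg at h
    have hcard' : μ.card = σ.card + (μ.card - σ.card) := by
      have := Finset.card_le_card hσμ; omega
    rcases key hf (μ.card - σ.card) σ μ hσK hμK hσμ hcard' with h' | ⟨ρ, hρK, hσρ, hρμ, hρc, hfρ⟩
    · linarith
    · have e1 : ρ ∈ K.exitSet f σ := by
        rw [mem_exitSet_iff]; exact ⟨hρK, Or.inr ⟨hσρ, by omega, hfρ⟩⟩
      have e2 : τ ∈ K.exitSet f σ := by
        rw [mem_exitSet_iff]; exact ⟨hτK, Or.inr ⟨hστ, hcard, hfτσ⟩⟩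
      have : ρ = τ := exit_unique hf hσK e1 e2
      exact ⟨hτK, μ, hμK, hfμ, this ▸ hρμ⟩

end SComplex
namespace SComplex

variable {V : Type} [DecidableEq V]

/-- Main induction: any intermediate complex `L` squeezed between `K_α` and `K`
whose non-`K_α` part is covered by gradient pairs lying in `L \ K_α`
collapses onto `K_α`. -/
lemma collapse_aux {K : SComplex V} {f : Finset V → ℝ} (hf : K.IsDiscreteMorse f) (α : ℝ) :
    ∀ (n : ℕ) (L : SComplex V), L.faces.card ≤ n →
      (K.sublevel f α).faces ⊆ L.faces → L.faces ⊆ K.faces →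
      (∀ η ∈ L.faces, η ∉ (K.sublevel f α).faces →
        ∃ p ∈ K.gradPairs f, (p.1 = η ∨ p.2 = η) ∧
          p.1 ∈ L.faces ∧ p.2 ∈ L.faces ∧
          p.1 ∉ (K.sublevel f α).faces ∧ p.2 ∉ (K.sublevel f α).faces) →
      L.CollapsesTo (K.sublevel f α) := by
  intro n
  induction n with
  | zero =>
    intro L hcard hsub _ _
    have hL : L.faces = ∅ := Finset.card_eq_zero.mp (Nat.le_zero.mp hcard)
    have : L = K.sublevel f α := faces_inj (by
      rw [hL]
      exact (Finset.subset_empty.mp (hL ▸ hsub)).symm)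
    rw [this]
    exact Relation.ReflTransGen.refl
  | succ n ihn =>
    intro L hcard hsub hsubK hInv
    by_cases heq : L.faces = (K.sublevel f α).faces
    · rw [faces_inj heq]
      exact Relation.ReflTransGen.refl
    -- pick an element of L \ K_α
    have hss : (K.sublevel f α).faces ⊂ L.faces := Finset.ssubset_iff_subset_ne.mpr ⟨hsub, Ne.symm heq⟩
    obtain ⟨η₀, hη₀L, hη₀α⟩ := Finset.exists_of_ssubset hss
    -- the set of gradient pairs fully inside L \ K_α
    set S : Finset (Finset V × Finset V) := (K.gradPairs f).filter
      (fun p => p.1 ∈ L.faces ∧ p.2 ∈ L.faces ∧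
        p.1 ∉ (K.sublevel f α).faces ∧ p.2 ∉ (K.sublevel f α).faces) with hS
    have hSne : S.Nonempty := by
      obtain ⟨p, hp, _, h1, h2, h3, h4⟩ := hInv η₀ hη₀L hη₀α
      exact ⟨p, Finset.mem_filter.mpr ⟨hp, h1, h2, h3, h4⟩⟩
    obtain ⟨p, hpS, hmax⟩ := Finset.exists_max_image S (fun p => f p.1) hSne
    rw [hS, Finset.mem_filter] at hpS
    obtain ⟨hpG, pL1, pL2, pα1, pα2⟩ := hpS
    rw [mem_gradPairs_iff] at hpG
    obtain ⟨hσK, hτK, hστ, hcard2, hfτσ⟩ := hpG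
    set σ := p.1 with hσdef
    set τ := p.2 with hτdef
    have exitτ : τ ∈ K.exitSet f σ := by
      rw [mem_exitSet_iff]; exact ⟨hτK, Or.inr ⟨hστ, hcard2, hfτσ⟩⟩
    have exitσ : σ ∈ K.exitSet f τ := by
      rw [mem_exitSet_iff]; exact ⟨hσK, Or.inl ⟨hστ, hcard2, hfτσ⟩⟩
    -- codimension-one cofaces of σ in L are exactly τ
    have huniq : ∀ ρ ∈ L.faces, σ ⊆ ρ → ρ.card = σ.card + 1 → ρ = τ := by
      intro ρ hρL hσρ hρc
      have hρα : ρ ∉ (K.sublevel f α).faces := fun h =>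
        pα1 ((K.sublevel f α).down_closed ρ h σ hσρ (K.nonempty_of_mem σ hσK))
      obtain ⟨q, hq, hqe, hq1L, hq2L, hq1α, hq2α⟩ := hInv ρ hρL hρα
      have hqS : q ∈ S := Finset.mem_filter.mpr ⟨hq, hq1L, hq2L, hq1α, hq2α⟩
      have h1 : f q.1 ≤ f σ := hmax q hqS
      rw [mem_gradPairs_iff] at hq
      have h2 : f ρ ≤ f q.1 := by
        rcases hqe with h | h
        · exact le_of_eq (by rw [h])
        · rw [← h]; exact hq.2.2.2.2
      have e1 : ρ ∈ K.exitSet f σ := by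
        rw [mem_exitSet_iff]
        exact ⟨hsubK hρL, Or.inr ⟨hσρ, by omega, le_trans h2 h1⟩⟩
      exact exit_unique hf hσK e1 exitτ
    have hfree : L.IsFreePair σ τ := by
      refine ⟨pL1, pL2, Finset.ssubset_iff_subset_ne.mpr ⟨hστ, fun h => by
        rw [h] at hcard2; omega⟩, ?_⟩
      intro ρ hρL hσρ
      have hclt : σ.card < ρ.card := Finset.card_lt_card hσρ
      rcases eq_or_lt_of_le (Nat.succ_le_of_lt hclt) with h | h
      · exact huniq ρ hρL hσρ.subset h.symm
      · exfalso
        have h2 : 1 < (ρ \ σ).card := by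
          rw [Finset.card_sdiff_of_subset hσρ.subset]; omega
        obtain ⟨v, hv, w, hw, hvw⟩ := Finset.one_lt_card.mp h2
        rw [Finset.mem_sdiff] at hv hw
        have hvL : insert v σ ∈ L.faces := L.down_closed ρ hρL _
          (Finset.insert_subset hv.1 hσρ.subset) (Finset.insert_nonempty _ _)
        have hwL : insert w σ ∈ L.faces := L.down_closed ρ hρL _
          (Finset.insert_subset hw.1 hσρ.subset) (Finset.insert_nonempty _ _)
        have hv' : insert v σ = τ := huniq _ hvL (Finset.subset_insert v σ)
          (Finset.card_insert_of_notMem hv.2)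
        have hw' : insert w σ = τ := huniq _ hwL (Finset.subset_insert w σ)
          (Finset.card_insert_of_notMem hw.2)
        have : v ∈ insert w σ := by rw [hw', ← hv']; exact Finset.mem_insert_self v σ
        rcases Finset.mem_insert.mp this with h' | h'
        · exact hvw h'
        · exact hv.2 h'
    -- the collapsed complex
    set L' : SComplex V := {
      faces := L.faces \ {σ, τ}
      nonempty_of_mem := fun s hs => L.nonempty_of_mem s (Finset.mem_sdiff.mp hs).1
      down_closed := by
        intro s hs t hts ht
        rw [Finset.mem_sdiff] at hs ⊢
        refine ⟨L.down_closed s hs.1 t hts ht, ?_⟩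
        intro htm
        rcases Finset.mem_insert.mp htm with h | h
        · -- t = σ
          have hsσ : σ ⊆ s := h ▸ hts
          have hsne : s ≠ σ := fun h' => hs.2 (h' ▸ (by simp : σ ∈ ({σ, τ} : Finset (Finset V))))
          have : s = τ := hfree.2.2.2 s hs.1 (Finset.ssubset_iff_subset_ne.mpr ⟨hsσ, Ne.symm hsne⟩)
          exact hs.2 (this ▸ (by simp : τ ∈ ({σ, τ} : Finset (Finset V))))
        · -- t = τ
          rw [Finset.mem_singleton] at h
          have hsτ : τ ⊆ s := h ▸ hts
          have hsne : s ≠ τ := fun h' => hs.2 (h' ▸ (by simp : τ ∈ ({σ, τ} : Finset (Finset V))))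
          have hσs : σ ⊂ s := lt_of_lt_of_le hfree.2.2.1 hsτ
          have : s = τ := hfree.2.2.2 s hs.1 hσs
          exact hsne this } with hL'
    have hstep : CollapseStep L L' := ⟨σ, τ, hfree, rfl⟩
    -- prove the invariants for L'
    have hστne : σ ≠ τ := fun h => by rw [h] at hcard2; omega
    have hcard' : L'.faces.card ≤ n := by
      have h1 : ({σ, τ} : Finset (Finset V)) ⊆ L.faces := by
        intro x hx
        rcases Finset.mem_insert.mp hx with h | h
        · exact h ▸ pL1
        · exact (Finset.mem_singleton.mp h) ▸ pL2
      have h2 : L'.faces ⊂ L.faces := Finset.sdiff_ssubset h1 ⟨σ, Finset.mem_insert_self _ _⟩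
      have := Finset.card_lt_card h2
      omega
    have hsub' : (K.sublevel f α).faces ⊆ L'.faces := by
      intro x hx
      rw [hL']
      rw [Finset.mem_sdiff]
      refine ⟨hsub hx, ?_⟩
      intro hxm
      rcases Finset.mem_insert.mp hxm with h | h
      · exact pα1 (h ▸ hx)
      · exact pα2 ((Finset.mem_singleton.mp h) ▸ hx)
    have hsubK' : L'.faces ⊆ K.faces := fun x hx => hsubK (Finset.mem_sdiff.mp hx).1
    have hInv' : ∀ η ∈ L'.faces, η ∉ (K.sublevel f α).faces →
        ∃ q ∈ K.gradPairs f, (q.1 = η ∨ q.2 = η) ∧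
          q.1 ∈ L'.faces ∧ q.2 ∈ L'.faces ∧
          q.1 ∉ (K.sublevel f α).faces ∧ q.2 ∉ (K.sublevel f α).faces := by
      intro η hηL' hηα
      rw [hL', Finset.mem_sdiff] at hηL'
      obtain ⟨hηL, hηn⟩ := hηL'
      obtain ⟨q, hq, hqe, hq1L, hq2L, hq1α, hq2α⟩ := hInv η hηL hηα
      have hqG := hq
      rw [mem_gradPairs_iff] at hqG
      obtain ⟨hq1K, hq2K, hq12, hqcard, hqf⟩ := hqG
      -- q.1 ≠ τ and q.2 ≠ σ (degree reasons + Morse)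
      have hq1τ : q.1 ≠ τ := by
        intro h
        have e2 : q.2 ∈ K.exitSet f τ := by
          rw [mem_exitSet_iff]
          exact ⟨hq2K, Or.inr ⟨h ▸ hq12, by rw [← h]; exact hqcard, h ▸ hqf⟩⟩
        have h2 := exit_unique hf hτK e2 exitσ
        rw [h, h2] at hqcard
        omega
      have hq2σ : q.2 ≠ σ := by
        intro h
        have e1 : q.1 ∈ K.exitSet f σ := by
          rw [mem_exitSet_iff]
          exact ⟨hq1K, Or.inl ⟨h ▸ hq12, by rw [← h]; exact hqcard, h ▸ hqf⟩⟩
        have h1 := exit_unique hf hσK e1 exitτ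
        rw [h, h1] at hqcard
        omega
      -- if q.1 = σ or q.2 = τ then q = p, contradicting η ∈ L'
      have hq1σ : q.1 ≠ σ := by
        intro h
        have e2 : q.2 ∈ K.exitSet f σ := by
          rw [mem_exitSet_iff]
          exact ⟨hq2K, Or.inr ⟨h ▸ hq12, by rw [← h]; exact hqcard, h ▸ hqf⟩⟩
        have h2 : q.2 = τ := exit_unique hf hσK e2 exitτ
        rcases hqe with h' | h'
        · exact hηn (by rw [← h', h]; exact (by simp : σ ∈ ({σ, τ} : Finset (Finset V))))
        · exact hηn (by rw [← h', h2]; exact (by simp : τ ∈ ({σ, τ} : Finset (Finset V))))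
      have hq2τ : q.2 ≠ τ := by
        intro h
        have e1 : q.1 ∈ K.exitSet f τ := by
          rw [mem_exitSet_iff]
          exact ⟨hq1K, Or.inl ⟨h ▸ hq12, by rw [← h]; exact hqcard, h ▸ hqf⟩⟩
        have h1 : q.1 = σ := exit_unique hf hτK e1 exitσ
        rcases hqe with h' | h'
        · exact hηn (by rw [← h', h1]; exact (by simp : σ ∈ ({σ, τ} : Finset (Finset V))))
        · exact hηn (by rw [← h', h]; exact (by simp : τ ∈ ({σ, τ} : Finset (Finset V))))
      refine ⟨q, hq, hqe, ?_, ?_, hq1α, hq2α⟩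
      · rw [hL', Finset.mem_sdiff]
        refine ⟨hq1L, fun hm => ?_⟩
        rcases Finset.mem_insert.mp hm with h | h
        · exact hq1σ h
        · exact hq1τ (Finset.mem_singleton.mp h)
      · rw [hL', Finset.mem_sdiff]
        refine ⟨hq2L, fun hm => ?_⟩
        rcases Finset.mem_insert.mp hm with h | h
        · exact hq2σ h
        · exact hq2τ (Finset.mem_singleton.mp h)
    exact Relation.ReflTransGen.head hstep (ihn L' hcard' hsub' hsubK' hInv')

end SComplex

/-- if `(α, β]` contains no critical values then `K_β ↘ K_α`. -/
theorem sublevel_collapses {V : Type} [DecidableEq V]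
    (K : SComplex V) (f : Finset V → ℝ) (hf : K.IsDiscreteMorse f)
    (α β : ℝ) (hαβ : α ≤ β)
    (hcrit : ∀ σ : Finset V, K.IsCritical f σ → f σ ∉ Set.Ioc α β) :
    (K.sublevel f β).CollapsesTo (K.sublevel f α) := by
  have hsubβ : (K.sublevel f α).faces ⊆ (K.sublevel f β).faces := by
    intro x hx
    simp only [SComplex.sublevel, Finset.mem_filter] at hx ⊢
    obtain ⟨hxK, μ, hμ, hfμ, hxμ⟩ := hx
    exact ⟨hxK, μ, hμ, le_trans hfμ hαβ, hxμ⟩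
  have hsubK : (K.sublevel f β).faces ⊆ K.faces := by
    intro x hx
    simp only [SComplex.sublevel, Finset.mem_filter] at hx
    exact hx.1
  apply SComplex.collapse_aux hf α ((K.sublevel f β).faces.card) _ le_rfl hsubβ hsubK
  intro η hηL hηα
  have hηK : η ∈ K.faces := hsubK hηL
  have hηL' := hηL
  simp only [SComplex.sublevel, Finset.mem_filter] at hηL'
  obtain ⟨-, μ, hμK, hfμ, hημ⟩ := hηL'
  have hηα' : α < f η := by
    by_contra h
    push_neg at h
    refine hηα ?_
    simp only [SComplex.sublevel, Finset.mem_filter]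
    exact ⟨hηK, η, hηK, h, Finset.Subset.refl η⟩
  have hexit : ∃ e, e ∈ K.exitSet f η := by
    by_contra h
    push_neg at h
    have hcr : K.IsCritical f η := ⟨hηK, Finset.eq_empty_iff_forall_notMem.mpr h⟩
    have hcard' : μ.card = η.card + (μ.card - η.card) := by
      have := Finset.card_le_card hημ; omega
    have hβ : f η ≤ β := by
      rcases SComplex.key hf _ η μ hηK hμK hημ hcard' with h' | ⟨ρ, hρK, hηρ, hρμ, hρc, hfρ⟩
      · linarith
      · exact absurd (SComplex.mem_exitSet_iff.mpr ⟨hρK, Or.inr ⟨hηρ, by omega, hfρ⟩⟩) (h ρ)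
    exact hcrit η hcr ⟨hηα', hβ⟩
  obtain ⟨e, he⟩ := hexit
  rw [SComplex.mem_exitSet_iff] at he
  obtain ⟨heK, hdown | hup⟩ := he
  · -- η is the top of the gradient pair (e, η)
    have hpair : (e, η) ∈ K.gradPairs f := by
      rw [SComplex.mem_gradPairs_iff]
      exact ⟨heK, hηK, hdown.1, hdown.2.1, hdown.2.2⟩
    refine ⟨(e, η), hpair, Or.inr rfl, ?_, hηL, ?_, hηα⟩
    · exact (K.sublevel f β).down_closed η hηL e hdown.1 (K.nonempty_of_mem e heK)
    · exact fun hmem => hηα (SComplex.top_mem_sublevel hf α hpair hmem)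
  · -- η is the bottom of the gradient pair (η, e)
    have hpair : (η, e) ∈ K.gradPairs f := by
      rw [SComplex.mem_gradPairs_iff]
      exact ⟨hηK, heK, hup.1, hup.2.1, hup.2.2⟩
    refine ⟨(η, e), hpair, Or.inl rfl, hηL, ?_, hηα, ?_⟩
    · exact SComplex.top_mem_sublevel hf β hpair hηL
    · exact fun hmem =>
        hηα ((K.sublevel f α).down_closed e hmem η hup.1 (K.nonempty_of_mem η hηK))
end

section
/- Let V be a discrete vector field on a finite simplicial complex K arising from a sequence of elementary collapses K = K_n ↘ K_{n−1} ↘ ⋯ ↘ K_0 = {v} (i.e., V consists of the removed free pairs). Then V is a well-defined discrete vector field (each simplex lies in at most one pair), V has no non-trivial closed V-paths, and the only simplex not covered by V is the final vertex v. -/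
open Classical

/-!
Record, for each pair of a collapse sequence, the position at which it is removed. A simplex
removed at some step is no longer present afterwards, so the removed pairs are pairwise disjoint,
and a V-path step from `p` to `q` (with `q.1 ⊆ p.2`) forces `q` to be removed after `p`: otherwise
`q.1` would still be a face of the simplex `p.2` after its own removal. Hence positions strictly
increase along V-paths, which rules out closed ones. Whatever survives all collapses lies in the
final complex `{v}`.
-/

namespace SComplex

theorem not_hasClosedVPath_of_rank {V : Type} {pairs : Set (Finset V × Finset V)}
    (rank : Finset V × Finset V → ℕ)
    (hrank : ∀ p ∈ pairs, ∀ q ∈ pairs, q.1 ⊆ p.2 → q.1 ≠ p.1 → rank p < rank q) :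
    ¬ HasClosedVPath pairs := by
  rintro ⟨c, hc, hmem, hchain, hclose, hclose_ne⟩
  let step : Finset V × Finset V → Finset V × Finset V → Prop :=
    fun p q => p ∈ pairs ∧ q ∈ pairs ∧ q.1 ⊆ p.2 ∧ q.1 ≠ p.1
  have hwf : WellFounded step :=
    Subrelation.wf (fun ⟨hp, hq, hsub, hne⟩ => hrank _ hp _ hq hsub hne) (measure rank).wf
  exact hwf.asymmetricₙ hc (hchain.imp_of_mem_imp fun p q hp hq h => ⟨hmem p hp, hmem q hq, h⟩)
    ⟨hmem _ (List.getLast_mem hc), hmem _ (List.head_mem hc), hclose, hclose_ne⟩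

variable {V : Type} [DecidableEq V]

theorem IsFreePair.card_add_one {K : SComplex V} {σ τ : Finset V} (h : K.IsFreePair σ τ) :
    σ.card + 1 = τ.card := by
  obtain ⟨hσ, hτ, hστ, hfree⟩ := h
  have hlt : σ.card < τ.card := Finset.card_lt_card hστ
  obtain ⟨u, hσu, huτ, hu⟩ :=
    Finset.exists_subsuperset_card_eq hστ.subset (n := σ.card + 1) (by omega) hlt
  have hσu' : σ ⊂ u := hσu.ssubset_of_ne (by rintro rfl; omega)
  have huK : u ∈ K.faces := K.down_closed τ hτ u huτ ((K.nonempty_of_mem σ hσ).mono hσu)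
  rw [← hfree u huK hσu', hu]

namespace CollapseSeq

variable {K L : SComplex V} {l : List (Finset V × Finset V)}

theorem mem_faces (h : CollapseSeq K l L) : ∀ p ∈ l, p.1 ∈ K.faces ∧ p.2 ∈ K.faces := by
  induction h with
  | nil => simp
  | cons hfree hK' _ ih =>
    rintro p (_ | ⟨_, hp⟩)
    · exact ⟨hfree.1, hfree.2.1⟩
    · simp only [hK', Finset.mem_sdiff] at ih
      exact ⟨(ih p hp).1.1, (ih p hp).2.1⟩

theorem ne_of_faces_eq_sdiff {K' : SComplex V} {σ τ : Finset V} (h : CollapseSeq K' l L)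
    (hK' : K'.faces = K.faces \ {σ, τ}) :
    ∀ p ∈ l, p.1 ≠ σ ∧ p.1 ≠ τ ∧ p.2 ≠ σ ∧ p.2 ≠ τ := by
  intro p hp
  have hmem := h.mem_faces p hp
  simp only [hK', Finset.mem_sdiff, Finset.mem_insert, Finset.mem_singleton] at hmem
  tauto

theorem codim_one (h : CollapseSeq K l L) : ∀ p ∈ l, p.1 ⊆ p.2 ∧ p.1.card + 1 = p.2.card := by
  induction h with
  | nil => simp
  | cons hfree _ _ ih =>
    rintro p (_ | ⟨_, hp⟩)
    · exact ⟨hfree.2.2.1.subset, hfree.card_add_one⟩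
    · exact ih p hp

theorem mem_of_uncovered (h : CollapseSeq K l L) :
    ∀ s ∈ K.faces, (∀ p ∈ l, s ≠ p.1 ∧ s ≠ p.2) → s ∈ L.faces := by
  induction h with
  | nil => simp
  | cons _ hK' _ ih =>
    intro s hs hunc
    have hhead := hunc _ List.mem_cons_self
    refine ih s ?_ fun p hp => hunc p (List.mem_cons_of_mem _ hp)
    simp only [hK', Finset.mem_sdiff, Finset.mem_insert, Finset.mem_singleton]
    tauto

theorem pairwise_disjoint (h : CollapseSeq K l L) :
    ∀ p ∈ l, ∀ q ∈ l, p ≠ q → p.1 ≠ q.1 ∧ p.1 ≠ q.2 ∧ p.2 ≠ q.1 ∧ p.2 ≠ q.2 := by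
  induction h with
  | nil => simp
  | cons _ hK' htail ih =>
    have hfresh := htail.ne_of_faces_eq_sdiff hK'
    rintro p (_ | ⟨_, hp⟩) q (_ | ⟨_, hq⟩) hpq
    · exact absurd rfl hpq
    · have := hfresh q hq
      exact ⟨this.1.symm, this.2.2.1.symm, this.2.1.symm, this.2.2.2.symm⟩
    · exact hfresh p hp
    · exact ih p hp q hq hpq

theorem idxOf_lt_of_vStep (h : CollapseSeq K l L) :
    ∀ p ∈ l, ∀ q ∈ l, q.1 ⊆ p.2 → q.1 ≠ p.1 → l.idxOf p < l.idxOf q := by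
  induction h with
  | nil => simp
  | @cons K K' _ σ τ tail hfree hK' htail ih =>
    have hfresh := htail.ne_of_faces_eq_sdiff hK'
    have hidx : ∀ p ∈ tail, ((σ, τ) :: tail).idxOf p = tail.idxOf p + 1 := fun p hp =>
      List.idxOf_cons_ne _ fun heq => (hfresh p hp).1 (by rw [← heq])
    rintro p (_ | ⟨_, hp⟩) q (_ | ⟨_, hq⟩) hsub hne
    · exact absurd rfl hne
    · rw [hidx q hq, List.idxOf_cons_self]
      omega
    · have hσ : σ ∈ K'.faces := K'.down_closed p.2 (htail.mem_faces p hp).2 σ hsub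
        (K.nonempty_of_mem σ hfree.1)
      simp [hK'] at hσ
    · rw [hidx p hp, hidx q hq]
      exact Nat.succ_lt_succ (ih p hp q hq hsub hne)

end CollapseSeq

end SComplex

/-- the pairs removed along a collapse sequence `K ↘ … ↘ {v}`
form a discrete vector field (each simplex in at most one pair, codimension-one
pairs of faces of `K`), it has no non-trivial closed V-paths, and the only
simplex of `K` not covered by a pair is the final vertex `v`. -/
theorem collapse_sequence_gives_gradient_field {V : Type} [DecidableEq V]
    (K : SComplex V) (v : V) (l : List (Finset V × Finset V))
    (hseq : SComplex.CollapseSeq K l (SComplex.pt v)) :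
    (∀ p ∈ l, p.1 ∈ K.faces ∧ p.2 ∈ K.faces ∧ p.1 ⊆ p.2 ∧ p.1.card + 1 = p.2.card) ∧
    (∀ p ∈ l, ∀ q ∈ l, p ≠ q →
      p.1 ≠ q.1 ∧ p.1 ≠ q.2 ∧ p.2 ≠ q.1 ∧ p.2 ≠ q.2) ∧
    ¬ SComplex.HasClosedVPath {p : Finset V × Finset V | p ∈ l} ∧
    (∀ s ∈ K.faces, (∀ p ∈ l, s ≠ p.1 ∧ s ≠ p.2) → s = {v}) :=
  ⟨fun p hp => ⟨(hseq.mem_faces p hp).1, (hseq.mem_faces p hp).2, hseq.codim_one p hp⟩,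
    hseq.pairwise_disjoint,
    SComplex.not_hasClosedVPath_of_rank l.idxOf hseq.idxOf_lt_of_vStep,
    fun s hs hunc => Finset.mem_singleton.mp (hseq.mem_of_uncovered s hs hunc)⟩
end
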